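/- An element (g, m) of the lamplighter group ℤ ≀ ℤ is the evaluation of a single palindromic word over the standard generators {a, t} if and only if g(x) = g(m − x) for all x ∈ ℤ. -/

import Mathlib

/-- A palindromic word over `X`: a finite list of elements of `X ∪ X⁻¹`
that reads the same forwards and backwards. -/
def IsPalindromicWord {G : Type*} [Group G] (X : Set G) (w : List G) : Prop :=
  (∀ g ∈ w, g ∈ X ∨ g⁻¹ ∈ X) ∧ w.reverse = w

/-- `g` is a product (in order) of the evaluations of `n` palindromic words over `X`. -/
def IsProdOfPalindromes {G : Type*} [Group G] (X : Set G) (n : ℕ) (g : G) : Prop :=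
  ∃ ws : List (List G), ws.length = n ∧ (∀ w ∈ ws, IsPalindromicWord X w) ∧
    (ws.map List.prod).prod = g

/-- The shift automorphism of `⨁_ℤ ℤ` (written multiplicatively): `(n • f) x = f (x - n)`. -/
noncomputable def lampShiftAut (n : ℤ) : Multiplicative (ℤ →₀ ℤ) ≃* Multiplicative (ℤ →₀ ℤ) :=
  AddEquiv.toMultiplicative (Finsupp.domCongr (Equiv.addRight n))

lemma lampShiftAut_apply (n : ℤ) (f : Multiplicative (ℤ →₀ ℤ)) (x : ℤ) :
    Multiplicative.toAdd (lampShiftAut n f) x = Multiplicative.toAdd f (x - n) := by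
  simp [lampShiftAut, Finsupp.domCongr_apply, sub_eq_add_neg]

/-- `ℤ` acting on `⨁_ℤ ℤ` by shifts. -/
noncomputable def lampShift : Multiplicative ℤ →* MulAut (Multiplicative (ℤ →₀ ℤ)) where
  toFun n := lampShiftAut n.toAdd
  map_one' := by
    ext f : 1
    apply (Multiplicative.toAdd).injective
    ext x
    rw [MulAut.one_apply, lampShiftAut_apply]
    norm_num
  map_mul' m n := by
    ext f : 1
    apply (Multiplicative.toAdd).injective
    ext x
    rw [MulAut.mul_apply, lampShiftAut_apply, lampShiftAut_apply, lampShiftAut_apply,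
      toAdd_mul]
    ring_nf

/-- The lamplighter group `ℤ ≀ ℤ = (⨁_ℤ ℤ) ⋊ ℤ`. -/
abbrev Lamplighter := Multiplicative (ℤ →₀ ℤ) ⋊[lampShift] Multiplicative ℤ

/-- The standard generator `a = (Δ₁, 0)` of `ℤ ≀ ℤ`. -/
noncomputable def genA : Lamplighter := ⟨Multiplicative.ofAdd (Finsupp.single 0 1), 1⟩

/-- The standard generator `t = (0, 1)` of `ℤ ≀ ℤ`. -/
noncomputable def genT : Lamplighter := ⟨1, Multiplicative.ofAdd 1⟩


/-!
The map `(f, m) ↦ (f (m - ·), m)` is an anti-automorphism of `ℤ ≀ ℤ` fixing `a` and `t`, so it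
sends the evaluation of a word to the evaluation of the reversed word. Palindromes therefore
evaluate to its fixed points, which are exactly the symmetric elements.

Conversely, a symmetric `(g, m)` factors as `u · c · ρ(u)`, where `ρ` is that anti-automorphism,
`u = (g|_{2x > m}, 0)` and `c = (g|_{2x = m}, m)`. If `w` is any word for `u` and `v` a palindrome
for `c` (`t^q a^{g q} t^q` when `m = 2q`, `t^m` when `m` is odd), then `w ++ v ++ w.reverse` is a
palindrome evaluating to `(g, m)`.
-/

section Palindromes

variable {G : Type*} [Group G] {X : Set G}

theorem IsPalindromicWord.append_append_reverse {u v : List G}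
    (hu : ∀ g ∈ u, g ∈ X ∨ g⁻¹ ∈ X) (hv : IsPalindromicWord X v) :
    IsPalindromicWord X (u ++ v ++ u.reverse) := by
  refine ⟨fun g hg => ?_, ?_⟩
  · simp only [List.mem_append, List.mem_reverse] at hg
    rcases hg with (hg | hg) | hg
    exacts [hu g hg, hv.1 g hg, hu g hg]
  · simp [hv.2]

theorem exists_isPalindromicWord_prod_eq_zpow {g : G} (hg : g ∈ X) (n : ℤ) :
    ∃ w, IsPalindromicWord X w ∧ w.prod = g ^ n := by
  obtain ⟨k, rfl | rfl⟩ := Int.eq_nat_or_neg n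
  · exact ⟨List.replicate k g, ⟨fun x hx => by simp [List.eq_of_mem_replicate hx, hg],
      List.reverse_replicate⟩, by simp⟩
  · exact ⟨List.replicate k g⁻¹, ⟨fun x hx => by simp [List.eq_of_mem_replicate hx, hg],
      List.reverse_replicate⟩, by simp⟩

theorem exists_list_prod_eq_of_mem_closure {g : G} (hg : g ∈ Subgroup.closure X) :
    ∃ w : List G, (∀ x ∈ w, x ∈ X ∨ x⁻¹ ∈ X) ∧ w.prod = g := by
  rw [← Subgroup.mem_toSubmonoid, Subgroup.closure_toSubmonoid] at hg
  exact Submonoid.exists_list_of_mem_closure hg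

theorem unop_map_list_prod_eq_prod_reverse (ρ : G →* Gᵐᵒᵖ) (hρ : ∀ x ∈ X, (ρ x).unop = x)
    {w : List G} (hw : ∀ g ∈ w, g ∈ X ∨ g⁻¹ ∈ X) : (ρ w.prod).unop = w.reverse.prod := by
  have hfix : ∀ g ∈ w, (ρ g).unop = g := fun g hg => (hw g hg).elim (hρ g) fun h => by
    simpa using congrArg (·⁻¹) (hρ _ h)
  rw [unop_map_list_prod, List.map_congr_left (f := MulOpposite.unop ∘ ρ) (g := id) hfix,
    List.map_id]

theorem IsPalindromicWord.unop_map_list_prod (ρ : G →* Gᵐᵒᵖ) (hρ : ∀ x ∈ X, (ρ x).unop = x)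
    {w : List G} (hw : IsPalindromicWord X w) : (ρ w.prod).unop = w.prod := by
  rw [unop_map_list_prod_eq_prod_reverse ρ hρ hw.1, hw.2]

end Palindromes

namespace Lamplighter

open SemidirectProduct

theorem ext {p q : Lamplighter} (hleft : ∀ x, p.left.toAdd x = q.left.toAdd x)
    (hright : p.right = q.right) : p = q :=
  SemidirectProduct.ext (Multiplicative.toAdd.injective (Finsupp.ext hleft)) hright

theorem left_mul_apply (p q : Lamplighter) (x : ℤ) :
    (p * q).left.toAdd x = p.left.toAdd x + q.left.toAdd (x - p.right.toAdd) := by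
  rw [mul_left, toAdd_mul, Finsupp.add_apply]
  exact congrArg (p.left.toAdd x + ·) (lampShiftAut_apply _ _ _)

/-- Reflection of the lamp configuration about the midpoint of `0` and the lamplighter's
position. -/
noncomputable def reverse : Lamplighter →* Lamplighterᵐᵒᵖ where
  toFun p := .op ⟨.ofAdd (p.left.toAdd.equivMapDomain (Equiv.subLeft p.right.toAdd)), p.right⟩
  map_one' := by
    refine MulOpposite.unop_injective (ext (fun x => ?_) rfl)
    simp
  map_mul' p q := by
    refine MulOpposite.unop_injective (ext (fun x => ?_) (mul_comm _ _))
    simp only [MulOpposite.unop_op, MulOpposite.unop_mul, left_mul_apply, toAdd_ofAdd,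
      Finsupp.equivMapDomain_apply, Equiv.subLeft_symm_apply, mul_right, toAdd_mul]
    ring_nf

theorem reverse_unop_left_apply (p : Lamplighter) (x : ℤ) :
    (reverse p).unop.left.toAdd x = p.left.toAdd (p.right.toAdd - x) := by
  simp [reverse, neg_add_eq_sub]

theorem reverse_unop_right (p : Lamplighter) : (reverse p).unop.right = p.right := rfl

theorem reverse_unop_of_mem {p : Lamplighter} (hp : p ∈ ({genA, genT} : Set Lamplighter)) :
    (reverse p).unop = p := by
  refine ext (fun x => ?_) rfl
  rcases hp with rfl | rfl
  · simp [reverse_unop_left_apply, genA, Finsupp.single_apply, eq_comm (a := (0 : ℤ))]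
  · simp [reverse_unop_left_apply, genT]

theorem genA_zpow (c : ℤ) : genA ^ c = inl (.ofAdd (Finsupp.single 0 c)) := by
  rw [show genA = inl (.ofAdd (Finsupp.single 0 1)) from rfl, ← map_zpow, ← ofAdd_zsmul,
    Finsupp.smul_single, smul_eq_mul, mul_one]

theorem genT_zpow (n : ℤ) : genT ^ n = inr (.ofAdd n) := by
  rw [show genT = inr (.ofAdd 1) from rfl, ← map_zpow, ← ofAdd_zsmul, smul_eq_mul, mul_one]

theorem inl_single (x c : ℤ) :
    (inl (.ofAdd (Finsupp.single x c)) : Lamplighter) = genT ^ x * genA ^ c * genT ^ (-x) := by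
  rw [genT_zpow, genA_zpow, genT_zpow, ofAdd_neg, ← inl_aut]
  congr 1
  simp [lampShift, lampShiftAut]

theorem closure_genA_genT : Subgroup.closure ({genA, genT} : Set Lamplighter) = ⊤ := by
  have hA : genA ∈ Subgroup.closure ({genA, genT} : Set Lamplighter) :=
    Subgroup.subset_closure (by simp)
  have hT : genT ∈ Subgroup.closure ({genA, genT} : Set Lamplighter) :=
    Subgroup.subset_closure (by simp)
  refine (Subgroup.eq_top_iff' _).2 fun p => ?_
  rw [← inl_left_mul_inr_right p, ← ofAdd_toAdd p.left, ← ofAdd_toAdd p.right, ← genT_zpow]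
  refine mul_mem ?_ (zpow_mem hT _)
  induction p.left.toAdd using Finsupp.induction_linear with
  | zero => exact one_mem _
  | add f f' hf hf' => rw [ofAdd_add, map_mul]; exact mul_mem hf hf'
  | single x c =>
    rw [inl_single]
    exact mul_mem (mul_mem (zpow_mem hT x) (zpow_mem hA c)) (zpow_mem hT (-x))

theorem exists_isPalindromicWord_of_support_midpoint {f : ℤ →₀ ℤ} {m : ℤ}
    (hf : ∀ x, f x ≠ 0 → 2 * x = m) :
    ∃ w, IsPalindromicWord {genA, genT} w ∧ w.prod = ⟨.ofAdd f, .ofAdd m⟩ := by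
  have hT : genT ∈ ({genA, genT} : Set Lamplighter) := by simp
  rcases Int.even_or_odd' m with ⟨q, rfl | rfl⟩
  · have hf_single : f = Finsupp.single q (f q) := by
      ext x
      by_cases hx : x = q
      · rw [hx, Finsupp.single_eq_same]
      · rw [Finsupp.single_eq_of_ne hx]
        by_contra h
        have := hf x h
        omega
    obtain ⟨u, hu, hu_prod⟩ := exists_isPalindromicWord_prod_eq_zpow hT q
    obtain ⟨v, hv, hv_prod⟩ :=
      exists_isPalindromicWord_prod_eq_zpow (by simp : genA ∈ ({genA, genT} : Set Lamplighter))
        (f q)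
    refine ⟨u ++ v ++ u.reverse, hv.append_append_reverse hu.1, ?_⟩
    rw [hu.2, List.prod_append, List.prod_append, hu_prod, hv_prod]
    calc genT ^ q * genA ^ f q * genT ^ q
        = genT ^ q * genA ^ f q * genT ^ (-q) * genT ^ (2 * q) := by group
      _ = ⟨.ofAdd f, .ofAdd (2 * q)⟩ := by
        rw [← inl_single, genT_zpow, ← mk_eq_inl_mul_inr, ← hf_single]
  · have hf_zero : f = 0 := by
      ext x
      by_contra hx
      have := hf x hx
      omega
    obtain ⟨w, hw, hw_prod⟩ := exists_isPalindromicWord_prod_eq_zpow hT (2 * q + 1)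
    exact ⟨w, hw, by rw [hw_prod, genT_zpow, hf_zero]; rfl⟩

theorem mk_eq_mul_mul_reverse {g : ℤ →₀ ℤ} {m : ℤ} (hg : ∀ x, g x = g (m - x)) :
    (⟨.ofAdd g, .ofAdd m⟩ : Lamplighter) =
      inl (.ofAdd (g.filter (m < 2 * ·))) * ⟨.ofAdd (g.filter (2 * · = m)), .ofAdd m⟩ *
        (reverse (inl (.ofAdd (g.filter (m < 2 * ·))))).unop := by
  refine ext (fun x => ?_) (by simp [reverse_unop_right])
  simp only [left_mul_apply, reverse_unop_left_apply, toAdd_ofAdd, right_inl, toAdd_one,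
    mul_right, toAdd_mul, Finsupp.filter_apply, left_inl, sub_zero, zero_add, zero_sub,
    neg_sub]
  rcases lt_trichotomy (2 * x) m with hx | hx | hx
  · rw [if_neg (by omega), if_neg (by omega), if_pos (by omega), hg x]
    ring_nf
  · rw [if_neg (by omega), if_pos hx, if_neg (by omega)]
    ring
  · rw [if_pos (by omega), if_neg (by omega), if_neg (by omega)]
    ring

end Lamplighter

open Lamplighter in
theorem palindrome_iff_symmetric (g : ℤ →₀ ℤ) (m : ℤ) :
    (∃ w : List Lamplighter, IsPalindromicWord {genA, genT} w ∧
        w.prod = (⟨Multiplicative.ofAdd g, Multiplicative.ofAdd m⟩ : Lamplighter)) ↔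
      ∀ x : ℤ, g x = g (m - x) := by
  have hfix : ∀ p ∈ ({genA, genT} : Set Lamplighter), (reverse p).unop = p :=
    fun _ => reverse_unop_of_mem
  constructor
  · rintro ⟨w, hw, hprod⟩ x
    have h := congrArg (fun p : Lamplighter => p.left.toAdd x) (hw.unop_map_list_prod _ hfix)
    rw [hprod] at h
    exact (reverse_unop_left_apply _ x).symm.trans h |>.symm
  · intro hg
    obtain ⟨u, hu, hu_prod⟩ := exists_list_prod_eq_of_mem_closure
      (g := SemidirectProduct.inl (.ofAdd (g.filter (m < 2 * ·))))
      (closure_genA_genT ▸ Subgroup.mem_top _)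
    obtain ⟨v, hv, hv_prod⟩ := exists_isPalindromicWord_of_support_midpoint
      (f := g.filter (2 * · = m)) fun x hx => by_contra fun h => hx (Finsupp.filter_apply_neg _ _ h)
    refine ⟨u ++ v ++ u.reverse, hv.append_append_reverse hu, ?_⟩
    rw [List.prod_append, List.prod_append, ← unop_map_list_prod_eq_prod_reverse _ hfix hu,
      hu_prod, hv_prod, mk_eq_mul_mul_reverse hg]
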